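/- arXiv:2505.23864 — 2 statements merged into one kernel-verified Lean document; each statement's English description precedes it below -/
import Mathlib

section
/- Let h_1, …, h_N be vectors in ℝ^{d'}, let s_1, …, s_N be pairwise distinct real numbers, and let π be the permutation of {1, …, N} that sorts the scores in increasing order: s_{π(1)} < s_{π(2)} < ⋯ < s_{π(N)}. For σ > 0 let z_i(σ) = Σ_{j=1}^N β_{ij}(σ) h_j be the kernel-smoothed embeddings, and let Z̃(σ) and H̃ be the sequences with t-th entries z_{π(t)}(σ) and h_{π(t)} respectively. Then the Frobenius norm ‖Z̃(σ) − H̃‖_F = (Σ_{t=1}^N ‖z_{π(t)}(σ) − h_{π(t)}‖²)^{1/2} tends to 0 as σ → 0⁺. -/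
/-!
For distinct scores the Gaussian kernel tends to the identity matrix as `σ → 0`, since
`exp (-c / σ²) → 0` for every `c > 0`. Hence the normalized weights `β_{ij}(σ)` tend to `δ_{ij}`,
each `z_i(σ)` tends to `h_i`, and continuity of the Frobenius norm finishes the argument.
-/
open Filter Topology

/-- Gaussian kernel `K_{ij}(σ) = exp(−(s_i − s_j)²/σ²)`. -/
noncomputable def gaussKernel {N : ℕ} (s : Fin N → ℝ) (σ : ℝ) (i j : Fin N) : ℝ :=
  Real.exp (-(s i - s j) ^ 2 / σ ^ 2)

/-- Normalized kernel weights `β_{ij}(σ) = K_{ij}(σ) / Σ_l K_{il}(σ)`. -/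
noncomputable def kernelWeight {N : ℕ} (s : Fin N → ℝ) (σ : ℝ) (i j : Fin N) : ℝ :=
  gaussKernel s σ i j / ∑ l, gaussKernel s σ i l

/-- Kernel-smoothed embeddings `z_i(σ) = Σ_j β_{ij}(σ) h_j`. -/
noncomputable def smoothedEmb {N d' : ℕ} (s : Fin N → ℝ)
    (h : Fin N → EuclideanSpace ℝ (Fin d')) (σ : ℝ) (i : Fin N) :
    EuclideanSpace ℝ (Fin d') :=
  ∑ j, kernelWeight s σ i j • h j

/-- Frobenius norm of a sequence of vectors: `‖X‖_F = (Σ_t ‖X_t‖²)^{1/2}`. -/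
noncomputable def frobNorm {N d' : ℕ} (X : Fin N → EuclideanSpace ℝ (Fin d')) : ℝ :=
  Real.sqrt (∑ t, ‖X t‖ ^ 2)


lemma tendsto_sq_nhdsNE_zero : Tendsto (fun σ : ℝ => σ ^ 2) (𝓝[≠] 0) (𝓝[>] 0) :=
  tendsto_nhdsWithin_iff.2
    ⟨(continuous_pow 2).tendsto' 0 0 (zero_pow two_ne_zero) |>.mono_left nhdsWithin_le_nhds,
      eventually_nhdsWithin_of_forall fun _ hσ => sq_pos_of_ne_zero hσ⟩

lemma tendsto_exp_neg_div_sq_nhdsNE_zero {c : ℝ} (hc : 0 < c) :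
    Tendsto (fun σ : ℝ => Real.exp (-c / σ ^ 2)) (𝓝[≠] 0) (𝓝 0) := by
  have hdiv : Tendsto (fun σ : ℝ => c / σ ^ 2) (𝓝[≠] 0) atTop := by
    simpa only [div_eq_mul_inv, Function.comp_def] using
      (tendsto_inv_nhdsGT_zero.comp tendsto_sq_nhdsNE_zero).const_mul_atTop hc
  simpa only [neg_div, Function.comp_def] using Real.tendsto_exp_atBot.comp (tendsto_neg_atTop_atBot.comp hdiv)

section

variable {N : ℕ} {s : Fin N → ℝ}

lemma gaussKernel_self (σ : ℝ) (i : Fin N) : gaussKernel s σ i i = 1 := by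
  simp [gaussKernel]

lemma tendsto_gaussKernel (hs : Function.Injective s) (i j : Fin N) :
    Tendsto (fun σ => gaussKernel s σ i j) (𝓝[≠] 0) (𝓝 (if j = i then 1 else 0)) := by
  split_ifs with hji
  · subst hji
    simp only [gaussKernel_self, tendsto_const_nhds]
  · have hne : s i - s j ≠ 0 := sub_ne_zero.2 fun hij => hji (hs hij).symm
    exact tendsto_exp_neg_div_sq_nhdsNE_zero (by positivity)

lemma tendsto_kernelWeight (hs : Function.Injective s) (i j : Fin N) :
    Tendsto (fun σ => kernelWeight s σ i j) (𝓝[≠] 0) (𝓝 (if j = i then 1 else 0)) := by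
  have hsum : Tendsto (fun σ => ∑ l, gaussKernel s σ i l) (𝓝[≠] 0) (𝓝 1) := by
    simpa using tendsto_finsetSum Finset.univ fun l _ => tendsto_gaussKernel hs i l
  have := (tendsto_gaussKernel hs i j).div hsum one_ne_zero
  rwa [div_one] at this

lemma tendsto_smoothedEmb {d' : ℕ} (hs : Function.Injective s)
    (h : Fin N → EuclideanSpace ℝ (Fin d')) (i : Fin N) :
    Tendsto (fun σ => smoothedEmb s h σ i) (𝓝[≠] 0) (𝓝 (h i)) := by
  simpa [smoothedEmb, Finset.sum_ite_eq'] using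
    tendsto_finsetSum Finset.univ fun j _ => (tendsto_kernelWeight hs i j).smul_const (h j)

end

lemma continuous_frobNorm {N d' : ℕ} :
    Continuous (frobNorm : (Fin N → EuclideanSpace ℝ (Fin d')) → ℝ) := by
  unfold frobNorm
  fun_prop

lemma frobNorm_zero {N d' : ℕ} : frobNorm (0 : Fin N → EuclideanSpace ℝ (Fin d')) = 0 := by
  simp [frobNorm]

theorem frobNorm_tendsto_zero_general {N d' : ℕ} (s : Fin N → ℝ) (hs : Function.Injective s)
    (h : Fin N → EuclideanSpace ℝ (Fin d')) (π : Equiv.Perm (Fin N)) :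
    Tendsto
      (fun σ : ℝ => frobNorm (fun t => smoothedEmb s h σ (π t) - h (π t)))
      (nhdsWithin 0 (Set.Ioi 0)) (nhds 0) := by
  have hdiff : Tendsto (fun σ t => smoothedEmb s h σ (π t) - h (π t)) (𝓝[≠] 0) (𝓝 0) :=
    tendsto_pi_nhds.2 fun t => by
      simpa using (tendsto_smoothedEmb hs h (π t)).sub_const (h (π t))
  simpa only [frobNorm_zero, Function.comp_def] using
    ((continuous_frobNorm.tendsto 0).comp hdiff).mono_left (nhdsGT_le_nhdsNE 0)

/-- **Matrix convergence in Frobenius norm** (Lemma D.3). With pairwise distinct scores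
sorted increasingly by the permutation `π`, the Frobenius norm of the difference between
the sorted smoothed embeddings `Z̃(σ)` and the sorted original embeddings `H̃` tends to
`0` as `σ → 0⁺`. -/
theorem frobNorm_tendsto_zero {N d' : ℕ} (s : Fin N → ℝ) (hs : Function.Injective s)
    (h : Fin N → EuclideanSpace ℝ (Fin d')) (π : Equiv.Perm (Fin N))
    (hπ : StrictMono fun t => s (π t)) :
    Tendsto
      (fun σ : ℝ => frobNorm (fun t => smoothedEmb s h σ (π t) - h (π t)))
      (nhdsWithin 0 (Set.Ioi 0)) (nhds 0) :=
  frobNorm_tendsto_zero_general s hs h π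
end

section
/- Fix vectors h_1, …, h_N ∈ ℝ^{d'}, σ > 0, and an index i. Define s_j(a) = ⟨a, h_j⟩, K_{ij}(a) = exp(−(s_i(a) − s_j(a))²/σ²), β_{ij}(a) = K_{ij}(a)/Σ_{l=1}^N K_{il}(a), and the kernel-smoothed embedding z_i(a) = Σ_{j=1}^N β_{ij}(a) h_j. Then z_i is Fréchet differentiable, and for every unit vector a and every v ∈ ℝ^{d'} with ⟨a, v⟩ = 0, the derivative of z_i at a in the direction v equals −(2/σ²) Σ_{j=1}^N β_{ij}(a) (s_i(a) − s_j(a)) · ⟨(h_i − h_j) − (s_i(a) − s_j(a)) a, v⟩ · (h_j − z_i(a)). -/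
open scoped RealInnerProductSpace

variable {N d' : ℕ}

/-- Similarity scores `s_j(a) = ⟪a, h_j⟫`. -/
noncomputable def score (h : Fin N → EuclideanSpace ℝ (Fin d'))
    (a : EuclideanSpace ℝ (Fin d')) (j : Fin N) : ℝ :=
  ⟪a, h j⟫

/-- Gaussian kernel entries `K_{ij}(a) = exp(−(s_i(a) − s_j(a))²/σ²)`. -/
noncomputable def kerEntry (h : Fin N → EuclideanSpace ℝ (Fin d')) (σ : ℝ)
    (i : Fin N) (a : EuclideanSpace ℝ (Fin d')) (j : Fin N) : ℝ :=
  Real.exp (-(score h a i - score h a j) ^ 2 / σ ^ 2)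

/-- Normalized kernel weights `β_{ij}(a) = K_{ij}(a) / Σ_l K_{il}(a)`. -/
noncomputable def kerWeight (h : Fin N → EuclideanSpace ℝ (Fin d')) (σ : ℝ)
    (i : Fin N) (a : EuclideanSpace ℝ (Fin d')) (j : Fin N) : ℝ :=
  kerEntry h σ i a j / ∑ l, kerEntry h σ i a l

/-- Kernel-smoothed embedding `z_i(a) = Σ_j β_{ij}(a) h_j`. -/
noncomputable def smoothedZ (h : Fin N → EuclideanSpace ℝ (Fin d')) (σ : ℝ)
    (i : Fin N) (a : EuclideanSpace ℝ (Fin d')) : EuclideanSpace ℝ (Fin d') :=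
  ∑ j, kerWeight h σ i a j • h j

/-!
The smoothed embedding is a weighted mean `Σ_j (w_j / Σ_l w_l) • x_j` of fixed vectors, and the
quotient rule shows that such a mean moves by `Σ_j (w_j' / Σ_l w_l) • (x_j − mean)`. For the
Gaussian weights `w_j' = w_j · (log w_j)'` with `(log K_{ij})' = −(2/σ²)(s_i − s_j)⟪h_i − h_j, ·⟫`;
on a tangent vector `v` the extra term `−(s_i − s_j) a` pairs to zero.
-/

open ContinuousLinearMap in
theorem HasFDerivAt.sum_div_sum_smul {ι E F : Type*} [Fintype ι]
    [NormedAddCommGroup E] [NormedSpace ℝ E] [NormedAddCommGroup F] [NormedSpace ℝ F]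
    {w : ι → E → ℝ} {w' : ι → E →L[ℝ] ℝ} {a : E} (x : ι → F)
    (hw : ∀ j, HasFDerivAt (w j) (w' j) a) (hS : ∑ l, w l a ≠ 0) :
    HasFDerivAt (fun b => ∑ j, (w j b / ∑ l, w l b) • x j)
      (∑ j, ((∑ l, w l a)⁻¹ • w' j).smulRight (x j - ∑ k, (w k a / ∑ l, w l a) • x k)) a := by
  have hinv : HasFDerivAt (fun b => (∑ l, w l b)⁻¹)
      ((toSpanSingleton ℝ (-((∑ l, w l a) ^ 2)⁻¹)).comp (∑ l, w' l)) a :=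
    (hasFDerivAt_inv hS).comp a (HasFDerivAt.fun_sum fun l _ => hw l)
  have hnum : HasFDerivAt (fun b => ∑ j, w j b • x j) (∑ j, (w' j).smulRight (x j)) a :=
    HasFDerivAt.fun_sum fun j _ => (hw j).smul_const (x j)
  have hdiv : ∀ b, ∑ j, (w j b / ∑ l, w l b) • x j = (∑ l, w l b)⁻¹ • ∑ j, w j b • x j := by
    intro b
    simp only [Finset.smul_sum, smul_smul, div_eq_inv_mul]
  simp only [hdiv]
  refine (hinv.smul hnum).congr_fderiv ?_
  ext v
  simp only [sum_apply, smulRight_apply, smul_apply, add_apply, comp_apply,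
    toSpanSingleton_apply, smul_sub, Finset.sum_sub_distrib, ← Finset.sum_smul, mul_smul,
    ← Finset.smul_sum, smul_eq_mul]
  module

theorem real_inner_sub_smul_left_of_inner_eq_zero {E : Type*} [NormedAddCommGroup E]
    [InnerProductSpace ℝ E] {a v : E} (u : E) (c : ℝ) (hav : ⟪a, v⟫ = 0) :
    ⟪u - c • a, v⟫ = ⟪u, v⟫ := by
  rw [inner_sub_left, real_inner_smul_left, hav, mul_zero, sub_zero]

section Kernel

variable (h : Fin N → EuclideanSpace ℝ (Fin d')) (σ : ℝ) (i : Fin N)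

theorem hasFDerivAt_score_sub (j : Fin N) (a : EuclideanSpace ℝ (Fin d')) :
    HasFDerivAt (fun b => score h b i - score h b j) (innerSL ℝ (h i - h j)) a := by
  have hlin : (fun b => score h b i - score h b j) = innerSL ℝ (h i - h j) := by
    ext b
    simp only [score, innerSL_apply_apply, inner_sub_left, real_inner_comm]
  rw [hlin]
  exact (innerSL ℝ (h i - h j)).hasFDerivAt

theorem hasFDerivAt_kerEntry (j : Fin N) (a : EuclideanSpace ℝ (Fin d')) :
    HasFDerivAt (fun b => kerEntry h σ i b j)
      (kerEntry h σ i a j •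
        (-(2 / σ ^ 2) * (score h a i - score h a j)) • innerSL ℝ (h i - h j)) a := by
  have hexp : ∀ b, kerEntry h σ i b j
      = Real.exp (-(σ ^ 2)⁻¹ * (score h b i - score h b j) ^ 2) := fun b => by
    rw [kerEntry, neg_div, div_eq_inv_mul, neg_mul]
  simp only [hexp]
  refine (((hasFDerivAt_score_sub h i j a).pow 2).const_mul _).exp.congr_fderiv ?_
  ext v
  simp only [smul_apply, smul_eq_mul]
  ring

theorem sum_kerEntry_pos (a : EuclideanSpace ℝ (Fin d')) : 0 < ∑ l, kerEntry h σ i a l :=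
  Finset.sum_pos (fun _ _ => Real.exp_pos _) ⟨i, Finset.mem_univ i⟩

theorem hasFDerivAt_smoothedZ (a : EuclideanSpace ℝ (Fin d')) :
    HasFDerivAt (smoothedZ h σ i)
      (∑ j, ((∑ l, kerEntry h σ i a l)⁻¹ • kerEntry h σ i a j •
          (-(2 / σ ^ 2) * (score h a i - score h a j)) • innerSL ℝ (h i - h j)).smulRight
        (h j - smoothedZ h σ i a)) a :=
  HasFDerivAt.sum_div_sum_smul h (fun j => hasFDerivAt_kerEntry h σ i j a)
    (sum_kerEntry_pos h σ i a).ne'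

end Kernel

theorem smoothedZ_tangential_gradient_general (h : Fin N → EuclideanSpace ℝ (Fin d'))
    (σ : ℝ) (i : Fin N) :
    Differentiable ℝ (smoothedZ h σ i) ∧
      ∀ a : EuclideanSpace ℝ (Fin d'), ‖a‖ = 1 →
        ∀ v : EuclideanSpace ℝ (Fin d'), ⟪a, v⟫ = 0 →
          fderiv ℝ (smoothedZ h σ i) a v =
            ∑ j, (-(2 / σ ^ 2) * kerWeight h σ i a j * (score h a i - score h a j) *
                ⟪(h i - h j) - (score h a i - score h a j) • a, v⟫) •
              (h j - smoothedZ h σ i a) := by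
  refine ⟨fun a => (hasFDerivAt_smoothedZ h σ i a).differentiableAt, fun a _ v hav => ?_⟩
  rw [(hasFDerivAt_smoothedZ h σ i a).fderiv, sum_apply]
  refine Finset.sum_congr rfl fun j _ => ?_
  rw [ContinuousLinearMap.smulRight_apply, real_inner_sub_smul_left_of_inner_eq_zero _ _ hav]
  congr 1
  simp only [smul_apply, innerSL_apply_apply, smul_eq_mul, kerWeight]
  ring

/-- **Gradient of the kernel-smoothed embedding** (Lemma C.3). The map
`a ↦ z_i(a) = Σ_j β_{ij}(a) h_j` is Fréchet differentiable, and for every unit vector `a`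
and tangent direction `v` (`⟪a, v⟫ = 0`), its derivative at `a` in direction `v` equals
`−(2/σ²) Σ_j β_{ij}(a)(s_i(a) − s_j(a)) ⟪(h_i − h_j) − (s_i(a) − s_j(a)) a, v⟫ (h_j − z_i(a))`. -/
theorem smoothedZ_tangential_gradient (h : Fin N → EuclideanSpace ℝ (Fin d'))
    (σ : ℝ) (hσ : 0 < σ) (i : Fin N) :
    Differentiable ℝ (smoothedZ h σ i) ∧
      ∀ a : EuclideanSpace ℝ (Fin d'), ‖a‖ = 1 →
        ∀ v : EuclideanSpace ℝ (Fin d'), ⟪a, v⟫ = 0 →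
          fderiv ℝ (smoothedZ h σ i) a v =
            ∑ j, (-(2 / σ ^ 2) * kerWeight h σ i a j * (score h a i - score h a j) *
                ⟪(h i - h j) - (score h a i - score h a j) • a, v⟫) •
              (h j - smoothedZ h σ i a) :=
  smoothedZ_tangential_gradient_general h σ i
end
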